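/- Let G be a finite group, H, K subgroups, R a ring, and g ∈ G. Then there is an isomorphism of R[H]-R[K]-bimodules R[HgK] ≅ R[Hg] ⊗_{R[K ∩ g⁻¹Hg]} R[K], where R[HgK] and R[Hg] are the free R-modules on the double coset HgK and the coset Hg respectively, with H acting on the left and K acting on the right by translation. -/

import Mathlib

/- Statement 16: for a finite group `G`, subgroups `H, K` and `g ∈ G`, there is
an isomorphism of `R[H]`-`R[K]`-bimodules
`R[HgK] ≅ R[Hg] ⊗_{R[K ∩ g⁻¹Hg]} R[K]`.

Since Mathlib has no balanced tensor product over the noncommutative ring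
`R[K ∩ g⁻¹Hg]`, the right-hand side is realised by its standard concrete
description: `R[Hg] ⊗_{R[L]} R[K] = R[(Hg × K)/L]`, the free `R`-module on the
balanced product `(Hg × K)/L`, where `l ∈ L = K ∩ g⁻¹Hg` identifies
`(x, k) ∼ (x·l, l⁻¹·k)` (this is the balanced tensor product of the free
modules `R[Hg]` and `R[K]`, `R[K]` being a free left `R[L]`-module).
The bimodule structures are the evident ones: `R` acts on coefficients on the
left and on the right, `H` acts by left translation and `K` by right
translation; an iso of bimodules is an additive equivalence commuting with all
four actions. -/

variable {G : Type*} [Group G]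

/-- The subgroup `K ∩ g⁻¹Hg`. -/
def interConj (H K : Subgroup G) (g : G) : Subgroup G :=
  K ⊓ Subgroup.map (MulAut.conj g⁻¹).toMonoidHom H

/-- The double coset `HgK` as a type. -/
abbrev HgKset (H K : Subgroup G) (g : G) : Type _ :=
  {x : G // ∃ h ∈ H, ∃ k ∈ K, x = h * g * k}

/-- The coset `Hg` as a type. -/
abbrev Hgset (H : Subgroup G) (g : G) : Type _ :=
  {x : G // ∃ h ∈ H, x = h * g}

/-- The balancing relation on `Hg × K`: `(x, k) ∼ (x·l, l⁻¹·k)` for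
`l ∈ K ∩ g⁻¹Hg`. -/
def balSetoid (H K : Subgroup G) (g : G) : Setoid (Hgset H g × K) where
  r a b := ∃ l ∈ interConj H K g,
    (b.1 : G) = (a.1 : G) * l ∧ (b.2 : G) = l⁻¹ * (a.2 : G)
  iseqv := by
    constructor
    · intro a; exact ⟨1, one_mem _, by simp, by simp⟩
    · rintro a b ⟨l, hl, h1, h2⟩
      exact ⟨l⁻¹, inv_mem hl, by rw [h1]; group, by rw [h2]; group⟩
    · rintro a b c ⟨l, hl, h1, h2⟩ ⟨l', hl', h1', h2'⟩
      exact ⟨l * l', mul_mem hl hl', by rw [h1', h1]; group,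
        by rw [h2', h2]; group⟩

/-- Left translation by `h ∈ H` on `HgK`. -/
def leftHmulHgK (H K : Subgroup G) (g : G) (h : H) (x : HgKset H K g) :
    HgKset H K g :=
  ⟨(h : G) * (x : G), by
    obtain ⟨h', hh', k, hk, hx⟩ := x.2
    exact ⟨(h : G) * h', mul_mem h.2 hh', k, hk, by rw [hx]; group⟩⟩

/-- Right translation by `k ∈ K` on `HgK`. -/
def rightKmulHgK (H K : Subgroup G) (g : G) (k : K) (x : HgKset H K g) :
    HgKset H K g :=
  ⟨(x : G) * (k : G), by
    obtain ⟨h', hh', k', hk', hx⟩ := x.2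
    exact ⟨h', hh', k' * (k : G), mul_mem hk' k.2, by rw [hx]; group⟩⟩

/-- Left translation by `h ∈ H` on the balanced product `(Hg × K)/L`. -/
def leftHmulBal (H K : Subgroup G) (g : G) (h : H) :
    Quotient (balSetoid H K g) → Quotient (balSetoid H K g) :=
  Quotient.map
    (fun a => (⟨(h : G) * (a.1 : G), by
        obtain ⟨h', hh', hx⟩ := a.1.2
        exact ⟨(h : G) * h', mul_mem h.2 hh', by rw [hx]; group⟩⟩, a.2))
    (by rintro a b ⟨l, hl, h1, h2⟩
        refine ⟨l, hl, ?_, h2⟩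
        show (h : G) * (b.1 : G) = (h : G) * (a.1 : G) * l
        rw [h1]; group)

/-- Right translation by `k ∈ K` on the balanced product `(Hg × K)/L`. -/
def rightKmulBal (H K : Subgroup G) (g : G) (k : K) :
    Quotient (balSetoid H K g) → Quotient (balSetoid H K g) :=
  Quotient.map (fun a => (a.1, a.2 * k))
    (by rintro a b ⟨l, hl, h1, h2⟩
        refine ⟨l, hl, h1, ?_⟩
        show (b.2 : G) * (k : G) = l⁻¹ * ((a.2 : G) * (k : G))
        rw [h2]; group)

/-! Multiplication `Hg × K → HgK` is onto, and `x * k = x' * k'` forces `(x', k') = (x l, l⁻¹ k)`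
for some `l ∈ K ∩ g⁻¹Hg`; so it descends to a bijection `(Hg × K)/(K ∩ g⁻¹Hg) ≃ HgK`. This
bijection intertwines left translation by `H` and right translation by `K`, and relabelling the
basis of the free module along it is the bimodule isomorphism. -/

namespace Finsupp

variable {α β M : Type*} [AddCommMonoid M]

theorem domCongr_smul {S : Type*} [DistribSMul S M] (e : α ≃ β) (s : S) (v : α →₀ M) :
    Finsupp.domCongr e (s • v) = s • Finsupp.domCongr e v := by
  simp only [domCongr_apply, equivMapDomain_eq_mapDomain, mapDomain_smul]

theorem domCongr_mapDomain_of_semiconj (e : α ≃ β) {f : α → α} {f' : β → β}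
    (h : Function.Semiconj e f f') (v : α →₀ M) :
    Finsupp.domCongr e (v.mapDomain f) = (Finsupp.domCongr e v).mapDomain f' := by
  simp only [domCongr_apply, equivMapDomain_eq_mapDomain, ← mapDomain_comp]
  exact mapDomain_congr fun a _ => h a

end Finsupp

theorem mem_interConj {H K : Subgroup G} {g l : G} :
    l ∈ interConj H K g ↔ l ∈ K ∧ g * l * g⁻¹ ∈ H := by
  rw [interConj, Subgroup.mem_inf, Subgroup.mem_map_equiv]
  simp

section BalancedProduct

variable (H K : Subgroup G) (g : G)

def balMul : Quotient (balSetoid H K g) → HgKset H K g :=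
  Quotient.lift
    (fun a => ⟨a.1 * a.2, by
      obtain ⟨h, hh, hx⟩ := a.1.2
      exact ⟨h, hh, a.2, a.2.2, by rw [hx]⟩⟩)
    (by
      rintro a b ⟨l, -, h1, h2⟩
      exact Subtype.ext (by simp only [h1, h2, mul_assoc, mul_inv_cancel_left]))

theorem balMul_injective : Function.Injective (balMul H K g) := by
  rintro ⟨x, k⟩ ⟨x', k'⟩ hxk
  have hmul : (x : G) * k = x' * k' := congrArg Subtype.val hxk
  obtain ⟨h, hh, hx⟩ := x.2
  obtain ⟨h', hh', hx'⟩ := x'.2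
  -- `l := k k'⁻¹ = x⁻¹ x'` lies in `K` by the first expression and in `g⁻¹Hg` by the second.
  have hl : (k : G) * (k' : G)⁻¹ = (x : G)⁻¹ * x' := by
    rw [mul_inv_eq_iff_eq_mul, mul_assoc, ← hmul, inv_mul_cancel_left]
  refine Quotient.sound
    ⟨k * (k' : G)⁻¹, mem_interConj.2 ⟨mul_mem k.2 (inv_mem k'.2), ?_⟩, ?_, ?_⟩
  · rw [hl, hx, hx']
    simpa [mul_assoc] using mul_mem (inv_mem hh) hh'
  · rw [hl, mul_inv_cancel_left]
  · group

theorem balMul_surjective : Function.Surjective (balMul H K g) := by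
  rintro ⟨x, h, hh, k, hk, rfl⟩
  exact ⟨⟦(⟨h * g, h, hh, rfl⟩, ⟨k, hk⟩)⟧, rfl⟩

theorem semiconj_balMul_leftHmul (h : H) :
    Function.Semiconj (balMul H K g) (leftHmulBal H K g h) (leftHmulHgK H K g h) := by
  rintro ⟨a⟩
  exact Subtype.ext (mul_assoc _ _ _)

theorem semiconj_balMul_rightKmul (k : K) :
    Function.Semiconj (balMul H K g) (rightKmulBal H K g k) (rightKmulHgK H K g k) := by
  rintro ⟨a⟩
  exact Subtype.ext (mul_assoc _ _ _).symm

noncomputable def balMulEquiv : Quotient (balSetoid H K g) ≃ HgKset H K g :=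
  Equiv.ofBijective _ ⟨balMul_injective H K g, balMul_surjective H K g⟩

theorem semiconj_balMulEquiv_symm_leftHmul (h : H) :
    Function.Semiconj (balMulEquiv H K g).symm (leftHmulHgK H K g h) (leftHmulBal H K g h) :=
  (semiconj_balMul_leftHmul H K g h).inverse_left (balMulEquiv H K g).left_inv
    (balMulEquiv H K g).right_inv

theorem semiconj_balMulEquiv_symm_rightKmul (k : K) :
    Function.Semiconj (balMulEquiv H K g).symm (rightKmulHgK H K g k) (rightKmulBal H K g k) :=
  (semiconj_balMul_rightKmul H K g k).inverse_left (balMulEquiv H K g).left_inv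
    (balMulEquiv H K g).right_inv

end BalancedProduct

theorem doubleCoset_tensor_decomposition_general
    (R : Type*) [Ring R] (G : Type*) [Group G]
    (H K : Subgroup G) (g : G) :
    ∃ e : (HgKset H K g →₀ R) ≃+ (Quotient (balSetoid H K g) →₀ R),
      (∀ (r : R) (v : HgKset H K g →₀ R), e (r • v) = r • e v) ∧
      (∀ (r : R) (v : HgKset H K g →₀ R),
        e (MulOpposite.op r • v) = MulOpposite.op r • e v) ∧
      (∀ (h : H) (v : HgKset H K g →₀ R),
        e (Finsupp.mapDomain (leftHmulHgK H K g h) v) =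
          Finsupp.mapDomain (leftHmulBal H K g h) (e v)) ∧
      (∀ (k : K) (v : HgKset H K g →₀ R),
        e (Finsupp.mapDomain (rightKmulHgK H K g k) v) =
          Finsupp.mapDomain (rightKmulBal H K g k) (e v)) :=
  ⟨Finsupp.domCongr (balMulEquiv H K g).symm,
    fun _ _ => Finsupp.domCongr_smul _ _ _,
    fun _ _ => Finsupp.domCongr_smul _ _ _,
    fun h => Finsupp.domCongr_mapDomain_of_semiconj _
      (semiconj_balMulEquiv_symm_leftHmul H K g h),
    fun k => Finsupp.domCongr_mapDomain_of_semiconj _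
      (semiconj_balMulEquiv_symm_rightKmul H K g k)⟩

/-- Mackey's bimodule decomposition for a finite group:
`R[HgK] ≅ R[Hg] ⊗_{R[K ∩ g⁻¹Hg]} R[K]` as `R[H]`-`R[K]`-bimodules, the
tensor product being realised as the free module on the balanced product
`(Hg × K)/(K ∩ g⁻¹Hg)`. -/
theorem doubleCoset_tensor_decomposition
    (R : Type*) [Ring R] (G : Type*) [Group G] [Finite G]
    (H K : Subgroup G) (g : G) :
    ∃ e : (HgKset H K g →₀ R) ≃+ (Quotient (balSetoid H K g) →₀ R),
      (∀ (r : R) (v : HgKset H K g →₀ R), e (r • v) = r • e v) ∧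
      (∀ (r : R) (v : HgKset H K g →₀ R),
        e (MulOpposite.op r • v) = MulOpposite.op r • e v) ∧
      (∀ (h : H) (v : HgKset H K g →₀ R),
        e (Finsupp.mapDomain (leftHmulHgK H K g h) v) =
          Finsupp.mapDomain (leftHmulBal H K g h) (e v)) ∧
      (∀ (k : K) (v : HgKset H K g →₀ R),
        e (Finsupp.mapDomain (rightKmulHgK H K g k) v) =
          Finsupp.mapDomain (rightKmulBal H K g k) (e v)) :=
  doubleCoset_tensor_decomposition_general R G H K g
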